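/- arXiv:1710.04601 — 7 statements merged into one kernel-verified Lean document; each statement's English description precedes it below -/
import Mathlib

section
/- The function f(s, z) = s·z + √(s·(1-s)·z·(1-z)) is concave on the domain [0,1] × [0,1] ⊆ ℝ². -/
/-- Tangent-plane inequality certificate. -/
lemma key_tangent (s z s0 z0 P Q P0 Q0 : ℝ)
    (hP : P ^ 2 = s * (1 - s)) (hQ : Q ^ 2 = z * (1 - z))
    (hP0 : P0 ^ 2 = s0 * (1 - s0)) (hQ0 : Q0 ^ 2 = z0 * (1 - z0)) :
    2 * P0 * Q0 * (s * z + P * Q) ≤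
      2 * P0 * Q0 * (s0 * z0 + P0 * Q0)
        + (2 * P0 * Q0 * z0 + Q0 ^ 2 * (1 - 2 * s0)) * (s - s0)
        + (2 * P0 * Q0 * s0 + P0 ^ 2 * (1 - 2 * z0)) * (z - z0) := by
  nlinarith [sq_nonneg (P * Q0 - Q * P0), sq_nonneg (Q0 * (s - s0) - P0 * (z - z0))]

lemma sqrt_split (u v : ℝ) (hu : 0 ≤ u) (hu1 : u ≤ 1) :
    Real.sqrt (u * (1 - u) * v * (1 - v)) =
      Real.sqrt (u * (1 - u)) * Real.sqrt (v * (1 - v)) := by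
  rw [show u * (1 - u) * v * (1 - v) = (u * (1 - u)) * (v * (1 - v)) by ring,
    Real.sqrt_mul (mul_nonneg hu (by linarith))]

set_option maxHeartbeats 1000000 in
theorem tradeoff_integrand_concave :
    ConcaveOn ℝ (Set.Icc (0 : ℝ) 1 ×ˢ Set.Icc (0 : ℝ) 1)
      (fun p : ℝ × ℝ => p.1 * p.2 + Real.sqrt (p.1 * (1 - p.1) * p.2 * (1 - p.2))) := by
  constructor
  · exact (convex_Icc 0 1).prod (convex_Icc 0 1)
  intro p hp q hq a b ha hb hab
  obtain ⟨⟨hp10, hp11⟩, ⟨hp20, hp21⟩⟩ := hp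
  obtain ⟨⟨hq10, hq11⟩, ⟨hq20, hq21⟩⟩ := hq
  simp only [Prod.fst_add, Prod.snd_add, Prod.smul_fst, Prod.smul_snd, smul_eq_mul]
  rcases eq_or_lt_of_le ha with rfl | ha'
  · have hb1 : b = 1 := by linarith
    simp [hb1]
  rcases eq_or_lt_of_le hb with rfl | hb'
  · have ha1 : a = 1 := by linarith
    simp [ha1]
  set x1 : ℝ := a * p.1 + b * q.1 with hx1
  set x2 : ℝ := a * p.2 + b * q.2 with hx2
  have hap1 : 0 ≤ a * p.1 := mul_nonneg ha hp10
  have hbq1 : 0 ≤ b * q.1 := mul_nonneg hb hq10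
  have hap2 : 0 ≤ a * p.2 := mul_nonneg ha hp20
  have hbq2 : 0 ≤ b * q.2 := mul_nonneg hb hq20
  have hap1' : 0 ≤ a * (1 - p.1) := mul_nonneg ha (by linarith)
  have hbq1' : 0 ≤ b * (1 - q.1) := mul_nonneg hb (by linarith)
  have hap2' : 0 ≤ a * (1 - p.2) := mul_nonneg ha (by linarith)
  have hbq2' : 0 ≤ b * (1 - q.2) := mul_nonneg hb (by linarith)
  have hx10 : 0 ≤ x1 := by rw [hx1]; linarith
  have hx11 : x1 ≤ 1 := by rw [hx1]; nlinarith [hap1', hbq1']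
  have hx20 : 0 ≤ x2 := by rw [hx2]; linarith
  have hx21 : x2 ≤ 1 := by rw [hx2]; nlinarith [hap2', hbq2']
  -- boundary cases
  rcases eq_or_lt_of_le hx10 with h10 | h10
  · -- x1 = 0 hence p.1 = q.1 = 0
    have hap : a * p.1 = 0 := by linarith [hx1, h10]
    have hbq : b * q.1 = 0 := by linarith [hx1, h10]
    have hp1 : p.1 = 0 := by
      rcases mul_eq_zero.1 hap with h | h
      · exact absurd h (ne_of_gt ha')
      · exact h
    have hq1 : q.1 = 0 := by
      rcases mul_eq_zero.1 hbq with h | h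
      · exact absurd h (ne_of_gt hb')
      · exact h
    simp [hp1, hq1, ← h10]
  rcases eq_or_lt_of_le hx11 with h11 | h11
  · -- x1 = 1 hence p.1 = q.1 = 1
    have h11' : a * p.1 + b * q.1 = 1 := by rw [← hx1]; exact h11
    have hsum : a * (1 - p.1) + b * (1 - q.1) = 0 := by linear_combination hab - h11'
    have hp1 : p.1 = 1 := by
      have h1 : a * (1 - p.1) = 0 := by linarith
      rcases mul_eq_zero.1 h1 with h | h
      · exact absurd h (ne_of_gt ha')
      · linarith
    have hq1 : q.1 = 1 := by
      have h1 : b * (1 - q.1) = 0 := by linarith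
      rcases mul_eq_zero.1 h1 with h | h
      · exact absurd h (ne_of_gt hb')
      · linarith
    simp only [hp1, hq1, h11, sub_self, zero_mul, mul_zero, Real.sqrt_zero, one_mul, add_zero]
    linarith [hx2.symm.le]
  rcases eq_or_lt_of_le hx20 with h20 | h20
  · have hap : a * p.2 = 0 := by linarith [hx2, h20]
    have hbq : b * q.2 = 0 := by linarith [hx2, h20]
    have hp2 : p.2 = 0 := by
      rcases mul_eq_zero.1 hap with h | h
      · exact absurd h (ne_of_gt ha')
      · exact h
    have hq2 : q.2 = 0 := by
      rcases mul_eq_zero.1 hbq with h | h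
      · exact absurd h (ne_of_gt hb')
      · exact h
    simp [hp2, hq2, ← h20]
  rcases eq_or_lt_of_le hx21 with h21 | h21
  · have h21' : a * p.2 + b * q.2 = 1 := by rw [← hx2]; exact h21
    have hsum : a * (1 - p.2) + b * (1 - q.2) = 0 := by linear_combination hab - h21'
    have hp2 : p.2 = 1 := by
      have h1 : a * (1 - p.2) = 0 := by linarith
      rcases mul_eq_zero.1 h1 with h | h
      · exact absurd h (ne_of_gt ha')
      · linarith
    have hq2 : q.2 = 1 := by
      have h1 : b * (1 - q.2) = 0 := by linarith
      rcases mul_eq_zero.1 h1 with h | h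
      · exact absurd h (ne_of_gt hb')
      · linarith
    simp only [hp2, hq2, h21, sub_self, zero_mul, mul_zero, Real.sqrt_zero, mul_one, add_zero]
    linarith [hx1.symm.le]
  -- interior case
  set P0 : ℝ := Real.sqrt (x1 * (1 - x1)) with hP0def
  set Q0 : ℝ := Real.sqrt (x2 * (1 - x2)) with hQ0def
  have hP0pos : 0 < P0 := Real.sqrt_pos.2 (mul_pos h10 (by linarith))
  have hQ0pos : 0 < Q0 := Real.sqrt_pos.2 (mul_pos h20 (by linarith))
  have hP0sq : P0 ^ 2 = x1 * (1 - x1) := Real.sq_sqrt (mul_nonneg hx10 (by linarith))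
  have hQ0sq : Q0 ^ 2 = x2 * (1 - x2) := Real.sq_sqrt (mul_nonneg hx20 (by linarith))
  set Pp : ℝ := Real.sqrt (p.1 * (1 - p.1)) with hPpdef
  set Qp : ℝ := Real.sqrt (p.2 * (1 - p.2)) with hQpdef
  set Pq : ℝ := Real.sqrt (q.1 * (1 - q.1)) with hPqdef
  set Qq : ℝ := Real.sqrt (q.2 * (1 - q.2)) with hQqdef
  have hPpsq : Pp ^ 2 = p.1 * (1 - p.1) := Real.sq_sqrt (mul_nonneg hp10 (by linarith))
  have hQpsq : Qp ^ 2 = p.2 * (1 - p.2) := Real.sq_sqrt (mul_nonneg hp20 (by linarith))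
  have hPqsq : Pq ^ 2 = q.1 * (1 - q.1) := Real.sq_sqrt (mul_nonneg hq10 (by linarith))
  have hQqsq : Qq ^ 2 = q.2 * (1 - q.2) := Real.sq_sqrt (mul_nonneg hq20 (by linarith))
  have hsp := sqrt_split p.1 p.2 hp10 hp11
  have hsq := sqrt_split q.1 q.2 hq10 hq11
  have hsx := sqrt_split x1 x2 hx10 hx11
  rw [hsp, hsq, hsx, ← hPpdef, ← hQpdef, ← hPqdef, ← hQqdef, ← hP0def, ← hQ0def]
  have key1 := key_tangent p.1 p.2 x1 x2 Pp Qp P0 Q0 hPpsq hQpsq hP0sq hQ0sq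
  have key2 := key_tangent q.1 q.2 x1 x2 Pq Qq P0 Q0 hPqsq hQqsq hP0sq hQ0sq
  have k1 := mul_le_mul_of_nonneg_left key1 ha
  have k2 := mul_le_mul_of_nonneg_left key2 hb
  have e1 : a * (p.1 - x1) + b * (q.1 - x1) = 0 := by
    rw [hx1]; linear_combination (-(a * p.1 + b * q.1)) * hab
  have e2 : a * (p.2 - x2) + b * (q.2 - x2) = 0 := by
    rw [hx2]; linear_combination (-(a * p.2 + b * q.2)) * hab
  have f1 : (2 * P0 * Q0 * x2 + Q0 ^ 2 * (1 - 2 * x1)) * (a * (p.1 - x1) + b * (q.1 - x1)) = 0 := by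
    rw [e1]; ring
  have f2 : (2 * P0 * Q0 * x1 + P0 ^ 2 * (1 - 2 * x2)) * (a * (p.2 - x2) + b * (q.2 - x2)) = 0 := by
    rw [e2]; ring
  have g : (a + b) * (2 * P0 * Q0 * (x1 * x2 + P0 * Q0)) = 2 * P0 * Q0 * (x1 * x2 + P0 * Q0) := by
    rw [hab]; ring
  have hcomb : 2 * P0 * Q0 * (a * (p.1 * p.2 + Pp * Qp) + b * (q.1 * q.2 + Pq * Qq)) ≤
      2 * P0 * Q0 * (x1 * x2 + P0 * Q0) := by
    linarith [k1, k2, f1, f2, g]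
  have h2pq : (0:ℝ) < 2 * P0 * Q0 := by positivity
  exact le_of_mul_le_mul_left hcomb h2pq
end

section
/- For d ≥ 2, the unique maximizer z* of the function z ↦ (1/2)·(z + M_d^q(z)) on [1/d, 1] satisfies z* = (1/2)·(1 + 1/√d), and at this point M_d^q(z*) = z*, so the maximum value is (1/2)·(1 + 1/√d). -/
/-!
Put `a = √z` and `b = √((1 - z) / (d - 1))`, so that `a² + (d - 1) b² = 1`. Completing the square
under this constraint gives
`z + M(z) = 1 + 1/√d - ((√d - 1) / d) (a - (√d + 1) b)²`,
so `z + M(z) ≤ 1 + 1/√d`, with equality exactly when `a = (√d + 1) b`, i.e. when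
`z = (1 + 1/√d) / 2`.
-/

open Real

noncomputable def qracTradeoff (d z : ℝ) : ℝ :=
  1 - ((d - 1) / d) * (√z - √((1 - z) / (d - 1))) ^ 2

lemma sq_add_sub_mul_sq_eq_of_constraint {a b s : ℝ} (hs : s ≠ 0)
    (hab : a ^ 2 + (s ^ 2 - 1) * b ^ 2 = 1) :
    a ^ 2 + (1 - ((s ^ 2 - 1) / s ^ 2) * (a - b) ^ 2) =
      1 + 1 / s - ((s - 1) / s ^ 2) * (a - (s + 1) * b) ^ 2 := by
  field_simp
  linear_combination s * hab

section

variable {d : ℝ}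

lemma add_qracTradeoff_eq (hd : 1 < d) {z : ℝ} (hz : z ∈ Set.Icc 0 1) :
    z + qracTradeoff d z =
      1 + 1 / √d - ((√d - 1) / d) * (√z - (√d + 1) * √((1 - z) / (d - 1))) ^ 2 := by
  have hsd : √d ^ 2 = d := sq_sqrt (by linarith)
  have ha : √z ^ 2 = z := sq_sqrt hz.1
  have hb : √((1 - z) / (d - 1)) ^ 2 = (1 - z) / (d - 1) :=
    sq_sqrt (div_nonneg (by linarith [hz.2]) (by linarith))
  have hab : √z ^ 2 + (√d ^ 2 - 1) * √((1 - z) / (d - 1)) ^ 2 = 1 := by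
    rw [ha, hb, hsd]
    field_simp [show d - 1 ≠ 0 by linarith]
    ring
  have h := sq_add_sub_mul_sq_eq_of_constraint (sqrt_pos.2 (by linarith : 0 < d)).ne' hab
  rwa [ha, hsd] at h

lemma add_qracTradeoff_le (hd : 1 < d) {z : ℝ} (hz : z ∈ Set.Icc 0 1) :
    z + qracTradeoff d z ≤ 1 + 1 / √d := by
  have : 0 ≤ (√d - 1) / d := div_nonneg (by linarith [one_le_sqrt.2 hd.le]) (by linarith)
  rw [add_qracTradeoff_eq hd hz]
  nlinarith [sq_nonneg (√z - (√d + 1) * √((1 - z) / (d - 1)))]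

lemma sqrt_eq_mul_sqrt_iff (hd : 1 < d) {z : ℝ} (hz : z ∈ Set.Icc 0 1) :
    √z = (√d + 1) * √((1 - z) / (d - 1)) ↔ z = (1 / 2) * (1 + 1 / √d) := by
  have hb : √((1 - z) / (d - 1)) ^ 2 = (1 - z) / (d - 1) :=
    sq_sqrt (div_nonneg (by linarith [hz.2]) (by linarith))
  rw [← sq_eq_sq₀ (sqrt_nonneg z) (by positivity), mul_pow, sq_sqrt hz.1, hb]
  set s := √d
  have hs : 1 < s := sqrt_one ▸ sqrt_lt_sqrt zero_le_one hd
  have hsd : s ^ 2 = d := sq_sqrt (by linarith)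
  have : s ^ 2 - 1 ≠ 0 := by nlinarith
  have : s ≠ 0 := by positivity
  rw [← hsd]
  calc z = (s + 1) ^ 2 * ((1 - z) / (s ^ 2 - 1))
      ↔ (s + 1) * (2 * s * z) = (s + 1) * (s + 1) := by
        rw [mul_div_assoc', eq_div_iff ‹_›]
        constructor <;> intro h <;> linear_combination h
    _ ↔ z = 1 / 2 * (1 + 1 / s) := by
        rw [mul_right_inj' (by positivity)]
        field_simp

lemma eq_of_add_qracTradeoff_eq (hd : 1 < d) {z : ℝ} (hz : z ∈ Set.Icc 0 1)
    (h : z + qracTradeoff d z = 1 + 1 / √d) : z = (1 / 2) * (1 + 1 / √d) := by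
  rw [add_qracTradeoff_eq hd hz, sub_eq_self, mul_eq_zero, sq_eq_zero_iff, sub_eq_zero] at h
  have hs : 1 < √d := sqrt_one ▸ sqrt_lt_sqrt zero_le_one hd
  exact (sqrt_eq_mul_sqrt_iff hd hz).1
    (h.resolve_left (div_ne_zero (by linarith) (by linarith)))

lemma half_one_add_inv_sqrt_mem_Icc (hd : 1 < d) :
    (1 / 2) * (1 + 1 / √d) ∈ Set.Icc (1 / d) 1 := by
  have hs : 1 < √d := sqrt_one ▸ sqrt_lt_sqrt zero_le_one hd
  have hsd : √d ^ 2 = d := sq_sqrt (by linarith)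
  have : 1 / √d ≤ 1 := by rw [div_le_one (by linarith)]; linarith
  have : 1 / d ≤ 1 / √d := one_div_le_one_div_of_le (by linarith) (by nlinarith)
  constructor <;> linarith

lemma qracTradeoff_half_one_add_inv_sqrt (hd : 1 < d) :
    qracTradeoff d ((1 / 2) * (1 + 1 / √d)) = (1 / 2) * (1 + 1 / √d) := by
  have hz : (1 / 2) * (1 + 1 / √d) ∈ Set.Icc 0 1 :=
    Set.Icc_subset_Icc_left (by positivity) (half_one_add_inv_sqrt_mem_Icc hd)
  have h := add_qracTradeoff_eq hd hz
  rw [(sqrt_eq_mul_sqrt_iff hd hz).2 rfl, sub_self] at h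
  linarith

end

theorem optimal_asp_maximizer (d : ℕ) (hd : 2 ≤ d) :
    let M : ℝ → ℝ := fun z =>
      1 - (((d : ℝ) - 1) / d) * (Real.sqrt z - Real.sqrt ((1 - z) / ((d : ℝ) - 1))) ^ 2
    let g : ℝ → ℝ := fun z => (1 / 2) * (z + M z)
    let zstar : ℝ := (1 / 2) * (1 + 1 / Real.sqrt d)
    zstar ∈ Set.Icc (1 / (d : ℝ)) 1 ∧
    (∀ z ∈ Set.Icc (1 / (d : ℝ)) 1, g z ≤ g zstar) ∧
    (∀ z ∈ Set.Icc (1 / (d : ℝ)) 1, g z = g zstar → z = zstar) ∧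
    M zstar = zstar ∧
    g zstar = (1 / 2) * (1 + 1 / Real.sqrt d) := by
  intro M g zstar
  have hd' : (1 : ℝ) < d := by exact_mod_cast hd
  have hzstar : zstar = (1 / 2) * (1 + 1 / √d) := rfl
  have hM : qracTradeoff d zstar = zstar := qracTradeoff_half_one_add_inv_sqrt hd'
  have hg : ∀ z, g z = (1 / 2) * (z + qracTradeoff d z) := fun _ => rfl
  have hgstar : g zstar = (1 / 2) * (1 + 1 / √d) := by rw [hg, hM, hzstar]; ring
  have hIcc : Set.Icc (1 / (d : ℝ)) 1 ⊆ Set.Icc 0 1 := Set.Icc_subset_Icc_left (by positivity)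
  refine ⟨half_one_add_inv_sqrt_mem_Icc hd', fun z hz => ?_, fun z hz h => ?_, hM, hgstar⟩
  · rw [hg, hgstar]
    linarith [add_qracTradeoff_le hd' (hIcc hz)]
  · rw [hg, hgstar] at h
    exact eq_of_add_qracTradeoff_eq hd' (hIcc hz) (by linarith)
end

section
/- For d ≥ 2, M_d^q(z) ≥ M_d^c(z) for all z ∈ [1/d, 1], where M_d^q(z) = 1 - ((d-1)/d)(√z - √((1-z)/(d-1)))² and M_d^c(z) = (d+1)/d - z, with equality at z = 1/d and z = 1. -/
open Real

/-!
Write `a = √z`, `b = √(1 - z)` and `s = √(d - 1)`. Then `(d - 1) (√z - √((1 - z)/(d - 1)))² = (s a - b)²`,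
and using `a² + b² = 1` the gap `M_q(z) - M_c(z)` collapses to `(2/d) b (s a - b)`. Since `s a = √((d - 1) z)`,
the bracket is nonnegative exactly when `(d - 1) z ≥ 1 - z`, i.e. `z ≥ 1/d`, and it vanishes at `z = 1/d`,
while the factor `b` vanishes at `z = 1`.
-/

noncomputable def quantumTradeoff (d z : ℝ) : ℝ :=
  1 - ((d - 1) / d) * (√z - √((1 - z) / (d - 1))) ^ 2

noncomputable def classicalTradeoff (d z : ℝ) : ℝ :=
  (d + 1) / d - z

section Tradeoff

variable {d z : ℝ}

theorem quantumTradeoff_sub_classicalTradeoff (hd : 1 < d) (hz₀ : 0 ≤ z) (hz₁ : z ≤ 1) :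
    quantumTradeoff d z - classicalTradeoff d z =
      2 / d * √(1 - z) * (√((d - 1) * z) - √(1 - z)) := by
  have hd₀ : 0 < d - 1 := sub_pos.mpr hd
  have ha : √z ^ 2 = z := sq_sqrt hz₀
  have hb : √(1 - z) ^ 2 = 1 - z := sq_sqrt (sub_nonneg.mpr hz₁)
  have hs : √(d - 1) ^ 2 = d - 1 := sq_sqrt hd₀.le
  rw [quantumTradeoff, classicalTradeoff, sqrt_div' _ hd₀.le, sqrt_mul hd₀.le]
  field_simp
  rw [hs]
  linear_combination (-(d - 1) * √z ^ 2) * hs - (d - 1) ^ 2 * ha + (d - 1) * hb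

theorem classicalTradeoff_le_quantumTradeoff (hd : 1 < d) (hz₀ : 1 / d ≤ z) (hz₁ : z ≤ 1) :
    classicalTradeoff d z ≤ quantumTradeoff d z := by
  have hdz : 1 ≤ d * z := by rwa [div_le_iff₀ (by linarith), mul_comm] at hz₀
  have hz : 0 ≤ z := le_trans (by positivity) hz₀
  rw [← sub_nonneg, quantumTradeoff_sub_classicalTradeoff hd hz hz₁]
  exact mul_nonneg (by positivity) (sub_nonneg.mpr (sqrt_le_sqrt (by linarith)))

theorem quantumTradeoff_one_div_self (hd : 1 < d) :
    quantumTradeoff d (1 / d) = classicalTradeoff d (1 / d) := by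
  have hdz : (d - 1) * (1 / d) = 1 - 1 / d := by field_simp
  rw [← sub_eq_zero, quantumTradeoff_sub_classicalTradeoff hd (by positivity)
    (div_le_one_of_le₀ hd.le (by positivity)), hdz, sub_self, mul_zero]

theorem quantumTradeoff_one (hd : 1 < d) : quantumTradeoff d 1 = classicalTradeoff d 1 := by
  rw [← sub_eq_zero, quantumTradeoff_sub_classicalTradeoff hd zero_le_one le_rfl, sub_self,
    sqrt_zero, mul_zero, zero_mul]

end Tradeoff

theorem quantum_tradeoff_ge_classical (d : ℕ) (hd : 2 ≤ d) :
    let Mq : ℝ → ℝ := fun z =>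
      1 - (((d : ℝ) - 1) / d) * (Real.sqrt z - Real.sqrt ((1 - z) / ((d : ℝ) - 1))) ^ 2
    let Mc : ℝ → ℝ := fun z => ((d : ℝ) + 1) / d - z
    (∀ z ∈ Set.Icc (1 / (d : ℝ)) 1, Mc z ≤ Mq z) ∧
    Mq (1 / (d : ℝ)) = Mc (1 / (d : ℝ)) ∧ Mq 1 = Mc 1 := by
  have hd' : (1 : ℝ) < d := by exact_mod_cast hd
  exact ⟨fun z hz => classicalTradeoff_le_quantumTradeoff hd' hz.1 hz.2,
    quantumTradeoff_one_div_self hd', quantumTradeoff_one hd'⟩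
end

section
/- For d² points with the constraints of the previous context and f(s,z) = s·z + √(s(1-s)z(1-z)), the sum ∑_x f(s_x, z_x) is at most d²·(z/d + √((1/d)(1-1/d)z(1-z))). -/
lemma tradeoff_amgm (α β p q : ℝ) (hβ : 0 ≤ β) (hαβ : α * β = 1) :
    p * q ≤ (α * p ^ 2 + β * q ^ 2) / 2 := by
  have key : 2 * α * (p * q) ≤ α ^ 2 * p ^ 2 + q ^ 2 := by nlinarith [sq_nonneg (α * p - q)]
  have key2 := mul_le_mul_of_nonneg_left key hβ
  have e1 : β * (2 * α * (p * q)) = 2 * (p * q) := by linear_combination 2 * (p * q) * hαβ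
  have e2 : β * (α ^ 2 * p ^ 2 + q ^ 2) = α * p ^ 2 + β * q ^ 2 := by
    linear_combination α * p ^ 2 * hαβ
  linarith

lemma tradeoff_pointwise (α β a z s' z' : ℝ) (hβ : 0 < β) (hαβ : α * β = 1)
    (hs0 : 0 ≤ s') (hs1 : s' ≤ 1) (hz0 : 0 ≤ z') (hz1 : z' ≤ 1) :
    s' * z' + Real.sqrt (s' * (1 - s') * z' * (1 - z')) ≤
      (z + α / 2 * (1 - 2 * a)) * s' + (a + β / 2 * (1 - 2 * z)) * z' +
        (-(a * z) + α / 2 * a ^ 2 + β / 2 * z ^ 2) := by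
  have hX : 0 ≤ s' * (1 - s') := mul_nonneg hs0 (by linarith)
  have hY : 0 ≤ z' * (1 - z') := mul_nonneg hz0 (by linarith)
  have hsplit : Real.sqrt (s' * (1 - s') * z' * (1 - z')) =
      Real.sqrt (s' * (1 - s')) * Real.sqrt (z' * (1 - z')) := by
    rw [← Real.sqrt_mul hX]; ring_nf
  set u := Real.sqrt (s' * (1 - s')) with hu'
  set v := Real.sqrt (z' * (1 - z')) with hv'
  have hu : u ^ 2 = s' * (1 - s') := Real.sq_sqrt hX
  have hv : v ^ 2 = z' * (1 - z') := Real.sq_sqrt hY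
  have h1 : u * v ≤ (α * (s' * (1 - s')) + β * (z' * (1 - z'))) / 2 := by
    rw [← hu, ← hv]; exact tradeoff_amgm α β u v hβ.le hαβ
  have h2 : (s' - a) * (z' - z) ≤ (α * (s' - a) ^ 2 + β * (z' - z) ^ 2) / 2 :=
    tradeoff_amgm α β _ _ hβ.le hαβ
  rw [hsplit]
  nlinarith [h1, h2]

theorem tradeoff_sum_bound (d : ℕ) (hd : 2 ≤ d) (z : ℝ) (hz0 : 0 ≤ z) (hz1 : z ≤ 1)
    (s zv : Fin (d ^ 2) → ℝ)
    (hs : ∀ x, s x ∈ Set.Icc (0 : ℝ) 1) (hzv : ∀ x, zv x ∈ Set.Icc (0 : ℝ) 1)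
    (hssum : ∑ x, s x = (d : ℝ)) (hzsum : ∑ x, zv x = z * (d : ℝ) ^ 2) :
    ∑ x, (s x * zv x + Real.sqrt (s x * (1 - s x) * zv x * (1 - zv x))) ≤
      (d : ℝ) ^ 2 *
        (z / d + Real.sqrt ((1 / d) * (1 - 1 / (d : ℝ)) * z * (1 - z))) := by
  have hd0 : (0 : ℝ) < d := by positivity
  have hd1 : (1 : ℝ) / d ≤ 1 / 2 := by
    apply div_le_div_of_nonneg_left (by norm_num) (by norm_num)
    exact_mod_cast hd
  have ha0 : 0 < (1 : ℝ) / d := by positivity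
  -- edge case z = 0
  rcases eq_or_lt_of_le hz0 with hz0' | hz0'
  · have hzv0 : ∀ x, zv x = 0 := by
      intro x
      have hsum0 : ∑ y, zv y = 0 := by rw [hzsum, ← hz0']; ring
      exact (Finset.sum_eq_zero_iff_of_nonneg (fun y _ => (hzv y).1)).mp hsum0 x
        (Finset.mem_univ x)
    have : ∀ x : Fin (d ^ 2), s x * zv x + Real.sqrt (s x * (1 - s x) * zv x * (1 - zv x)) = 0 := by
      intro x; rw [hzv0 x]; simp
    rw [Finset.sum_congr rfl (fun x _ => this x)]
    simp only [Finset.sum_const_zero]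
    positivity
  -- edge case z = 1
  rcases eq_or_lt_of_le hz1 with hz1' | hz1'
  · have hzv1 : ∀ x, zv x = 1 := by
      intro x
      have h : ∑ y, (1 - zv y) = 0 := by
        rw [Finset.sum_sub_distrib, hzsum, hz1']
        simp [Finset.card_fin]
      have h2 := Finset.sum_eq_zero_iff_of_nonneg
        (fun y _ => by linarith [(hzv y).2] : ∀ y ∈ Finset.univ, 0 ≤ 1 - zv y)
      have := (h2.mp h) x (Finset.mem_univ x)
      linarith
    have he : ∀ x : Fin (d ^ 2),
        s x * zv x + Real.sqrt (s x * (1 - s x) * zv x * (1 - zv x)) = s x := by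
      intro x; rw [hzv1 x]; simp
    rw [Finset.sum_congr rfl (fun x _ => he x), hssum]
    rw [hz1']
    have : Real.sqrt ((1 / d) * (1 - 1 / (d : ℝ)) * 1 * (1 - 1)) = 0 := by simp
    rw [this, add_zero]
    have he2 : (d : ℝ) ^ 2 * ((1 : ℝ) / d) = d := by field_simp
    rw [he2]
  -- main case 0 < z < 1
  · set a : ℝ := 1 / d with ha
    have ha1 : a < 1 := by rw [ha]; linarith
    have haa : 0 < a * (1 - a) := mul_pos ha0 (by linarith)
    have hzz : 0 < z * (1 - z) := by nlinarith
    set P : ℝ := Real.sqrt (a * (1 - a)) with hP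
    set Q : ℝ := Real.sqrt (z * (1 - z)) with hQ
    have hP0 : 0 < P := Real.sqrt_pos.mpr haa
    have hQ0 : 0 < Q := Real.sqrt_pos.mpr hzz
    have hP2 : P ^ 2 = a * (1 - a) := Real.sq_sqrt haa.le
    have hQ2 : Q ^ 2 = z * (1 - z) := Real.sq_sqrt hzz.le
    set α : ℝ := Q / P with hα'
    set β : ℝ := P / Q with hβ'
    have hα : 0 < α := by positivity
    have hβ : 0 < β := by positivity
    have hαβ : α * β = 1 := by
      rw [hα', hβ']; field_simp
    have hbound : ∀ x : Fin (d ^ 2),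
        s x * zv x + Real.sqrt (s x * (1 - s x) * zv x * (1 - zv x)) ≤
          (z + α / 2 * (1 - 2 * a)) * s x + (a + β / 2 * (1 - 2 * z)) * zv x +
            (-(a * z) + α / 2 * a ^ 2 + β / 2 * z ^ 2) := fun x =>
      tradeoff_pointwise α β a z (s x) (zv x) hβ hαβ (hs x).1 (hs x).2 (hzv x).1 (hzv x).2
    calc ∑ x, (s x * zv x + Real.sqrt (s x * (1 - s x) * zv x * (1 - zv x)))
        ≤ ∑ x : Fin (d ^ 2), ((z + α / 2 * (1 - 2 * a)) * s x + (a + β / 2 * (1 - 2 * z)) * zv x +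
            (-(a * z) + α / 2 * a ^ 2 + β / 2 * z ^ 2)) :=
          Finset.sum_le_sum (fun x _ => hbound x)
      _ = (z + α / 2 * (1 - 2 * a)) * (d : ℝ) + (a + β / 2 * (1 - 2 * z)) * (z * (d : ℝ) ^ 2) +
            (d : ℝ) ^ 2 * (-(a * z) + α / 2 * a ^ 2 + β / 2 * z ^ 2) := by
          rw [Finset.sum_add_distrib, Finset.sum_add_distrib, ← Finset.mul_sum, ← Finset.mul_sum,
            hssum, hzsum, Finset.sum_const, Finset.card_fin]
          push_cast; ring
      _ = (d : ℝ) ^ 2 * (a * z + (α / 2) * (a * (1 - a)) + (β / 2) * (z * (1 - z))) := by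
          rw [ha]
          field_simp
          ring
      _ = (d : ℝ) ^ 2 * (z / d + Real.sqrt ((1 / d) * (1 - 1 / (d : ℝ)) * z * (1 - z))) := by
          have hPQ : P * Q = Real.sqrt ((1 / d) * (1 - 1 / (d : ℝ)) * z * (1 - z)) := by
            rw [hP, hQ, ← Real.sqrt_mul haa.le, ha]; ring_nf
          rw [← hPQ]
          have e1 : (α / 2) * (a * (1 - a)) = P * Q / 2 := by
            rw [hα', ← hP2]; field_simp
          have e2 : (β / 2) * (z * (1 - z)) = P * Q / 2 := by
            rw [hβ', ← hQ2]; field_simp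
          rw [e1, e2, ha]
          field_simp
          ring
end

section
/- For d = 1024, the optimal quantum ASP (1/2)(1 + 1/32) = 0.515625 strictly exceeds the value max_{z₁∈[1/512,1], z₂∈[1/2,1]} (1/2)[z₁z₂ + M_{512}^q(z₁)·M_2^q(z₂)], and the latter is less than 0.501. -/
set_option maxHeartbeats 1000000 in
lemma q512q2_pointwise (z₁ z₂ : ℝ) (h1 : 1/512 ≤ z₁) (h1' : z₁ ≤ 1)
    (h2 : 1/2 ≤ z₂) (h2' : z₂ ≤ 1) :
    (1/2 : ℝ) * (z₁ * z₂ +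
      (1 - (511/512) * (Real.sqrt z₁ - Real.sqrt ((1 - z₁)/511))^2) *
      (1 - (1/2) * (Real.sqrt z₂ - Real.sqrt (1 - z₂))^2)) ≤ 511/1020 := by
  have h10 : (0:ℝ) ≤ z₁ := by linarith
  have h1n : (0:ℝ) ≤ 1 - z₁ := by linarith
  have h20 : (0:ℝ) ≤ z₂ := by linarith
  have h2n : (0:ℝ) ≤ 1 - z₂ := by linarith
  set s : ℝ := Real.sqrt 511 with hs_def
  set w₁ : ℝ := Real.sqrt (z₁ * (1 - z₁)) with hw1_def
  set w₂ : ℝ := Real.sqrt (z₂ * (1 - z₂)) with hw2_def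
  have hs2 : s^2 = 511 := Real.sq_sqrt (by norm_num)
  have hs0 : 0 < s := Real.sqrt_pos.2 (by norm_num)
  have hw12 : w₁^2 = z₁ * (1 - z₁) := Real.sq_sqrt (mul_nonneg h10 h1n)
  have hw10 : 0 ≤ w₁ := Real.sqrt_nonneg _
  have hw22 : w₂^2 = z₂ * (1 - z₂) := Real.sq_sqrt (mul_nonneg h20 h2n)
  have hw20 : 0 ≤ w₂ := Real.sqrt_nonneg _
  -- expand M₂
  have hM2 : 1 - (1/2) * (Real.sqrt z₂ - Real.sqrt (1 - z₂))^2 = 1/2 + w₂ := by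
    have ha : (Real.sqrt z₂)^2 = z₂ := Real.sq_sqrt h20
    have hb : (Real.sqrt (1 - z₂))^2 = 1 - z₂ := Real.sq_sqrt h2n
    have hab : Real.sqrt z₂ * Real.sqrt (1 - z₂) = w₂ := by
      rw [hw2_def, ← Real.sqrt_mul h20]
    rw [sub_sq, ha, hb]
    linear_combination hab
  -- expand M₁
  have hM1 : 1 - (511/512) * (Real.sqrt z₁ - Real.sqrt ((1 - z₁)/511))^2
      = (511 - 510*z₁)/512 + (s/256) * w₁ := by
    have ha : (Real.sqrt z₁)^2 = z₁ := Real.sq_sqrt h10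
    have hb : (Real.sqrt ((1 - z₁)/511))^2 = (1 - z₁)/511 :=
      Real.sq_sqrt (by positivity)
    have hab : Real.sqrt z₁ * Real.sqrt ((1 - z₁)/511) = w₁ / s := by
      rw [← Real.sqrt_mul h10, show z₁ * ((1 - z₁)/511) = z₁ * (1 - z₁) / 511 by ring,
        Real.sqrt_div (mul_nonneg h10 h1n)]
    have hab2 : Real.sqrt z₁ * Real.sqrt ((1 - z₁)/511) * s = w₁ := by
      rw [hab]; field_simp
    rw [sub_sq, ha, hb]
    linear_combination (s/256) * hab2 - ((Real.sqrt z₁ * Real.sqrt ((1 - z₁)/511))/256) * hs2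
  -- M₁ ≤ 1
  have hM1le : (511 - 510*z₁)/512 + (s/256) * w₁ ≤ 1 := by
    rw [← hM1]; nlinarith [sq_nonneg (Real.sqrt z₁ - Real.sqrt ((1 - z₁)/511))]
  rw [hM1, hM2]
  clear_value s w₁ w₂
  clear hs_def hw1_def hw2_def hM1 hM2
  set M₁ : ℝ := (511 - 510*z₁)/512 + (s/256) * w₁ with hM1_def
  clear_value M₁
  -- R ≥ 0
  have hR : 0 ≤ ((511:ℝ)/255)^2 - 2*(511/255)*z₁ - (2*(511/255) - 2*z₁)*((511 - 510*z₁)/512) := by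
    nlinarith [mul_nonneg (by linarith : (0:ℝ) ≤ z₁ - 1/512) (by linarith : (0:ℝ) ≤ 1 - z₁)]
  -- L ≤ R
  have hL : (2*((511:ℝ)/255) - 2*z₁)*(s/256)*w₁
      ≤ ((511:ℝ)/255)^2 - 2*(511/255)*z₁ - (2*(511/255) - 2*z₁)*((511 - 510*z₁)/512) := by
    have hCz : (0:ℝ) ≤ 2*(511/255) - 2*z₁ := by linarith
    have hLnn : 0 ≤ (2*((511:ℝ)/255) - 2*z₁)*(s/256)*w₁ :=
      mul_nonneg (mul_nonneg hCz (by positivity)) hw10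
    have he : ((2*((511:ℝ)/255) - 2*z₁)*(s/256)*w₁)^2
        = (2*(511/255) - 2*z₁)^2 * (z₁*(1-z₁)) * 511 / 65536 := by
      rw [show ((2*((511:ℝ)/255) - 2*z₁)*(s/256)*w₁)^2
        = (2*(511/255) - 2*z₁)^2 * s^2 * w₁^2 / 65536 from by ring, hs2, hw12]; ring
    have hiden : (((511:ℝ)/255)^2 - 2*(511/255)*z₁ - (2*(511/255) - 2*z₁)*((511 - 510*z₁)/512))^2
        - (2*(511/255) - 2*z₁)^2 * (z₁*(1-z₁)) * 511 / 65536
        = (2*z₁^2 - (131327/65280)*z₁ + 261121/16646400)^2 := by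
      ring
    have hsq : ((2*((511:ℝ)/255) - 2*z₁)*(s/256)*w₁)^2
        ≤ (((511:ℝ)/255)^2 - 2*(511/255)*z₁ - (2*(511/255) - 2*z₁)*((511 - 510*z₁)/512))^2 := by
      rw [he]
      linarith [hiden, sq_nonneg (2*z₁^2 - (131327/65280)*z₁ + 261121/16646400)]
    nlinarith [hsq, hLnn, hR]
  -- N ≤ C - z₁ - M₁
  set N : ℝ := Real.sqrt (z₁^2 + M₁^2) with hN_def
  have hN2 : N^2 = z₁^2 + M₁^2 := Real.sq_sqrt (by positivity)
  have hN0 : 0 ≤ N := Real.sqrt_nonneg _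
  clear_value N
  clear hN_def
  have hCM : 0 ≤ (511:ℝ)/255 - z₁ - M₁ := by
    linarith [hM1le]
  have hNle : N ≤ (511:ℝ)/255 - z₁ - M₁ := by
    have hsq : N^2 ≤ ((511:ℝ)/255 - z₁ - M₁)^2 := by
      rw [hN2, hM1_def]
      nlinarith [hL]
    nlinarith [hsq, hN0, hCM]
  -- Cauchy–Schwarz step
  have hX : z₁*(2*z₂ - 1) + 2*M₁*w₂ ≤ N := by
    have h0 : 1 - (2*z₂ - 1)^2 - 4*w₂^2 = 0 := by linear_combination (-4) * hw22
    have hid2 : z₁^2 + M₁^2 - (z₁*(2*z₂ - 1) + 2*M₁*w₂)^2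
        = (2*z₁*w₂ - M₁*(2*z₂ - 1))^2
          + (z₁^2 + M₁^2) * (1 - (2*z₂ - 1)^2 - 4*w₂^2) := by ring
    rw [h0, mul_zero, add_zero] at hid2
    have hsq : (z₁*(2*z₂ - 1) + 2*M₁*w₂)^2 ≤ N^2 := by
      rw [hN2]; linarith [hid2, sq_nonneg (2*z₁*w₂ - M₁*(2*z₂ - 1))]
    nlinarith [hsq, hN0]
  -- combine
  have hrw : (1/2 : ℝ) * (z₁ * z₂ + M₁ * (1/2 + w₂))
      = (z₁ + M₁)/4 + (z₁*(2*z₂ - 1) + 2*M₁*w₂)/4 := by ring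
  rw [hrw]
  linarith [hX, hNle]

theorem q1024_beats_q512q2 :
    let Mq : ℕ → ℝ → ℝ := fun d z =>
      1 - (((d : ℝ) - 1) / d) * (Real.sqrt z - Real.sqrt ((1 - z) / ((d : ℝ) - 1))) ^ 2
    let S : Set ℝ :=
      Set.image2 (fun z₁ z₂ => (1 / 2 : ℝ) * (z₁ * z₂ + Mq 512 z₁ * Mq 2 z₂))
        (Set.Icc (1 / 512 : ℝ) 1) (Set.Icc (1 / 2 : ℝ) 1)
    sSup S < 0.501 ∧ (0.515625 : ℝ) > sSup S ∧
      (0.515625 : ℝ) = (1 / 2) * (1 + 1 / 32) := by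
  intro Mq S
  have key : ∀ x ∈ S, x ≤ 511/1020 := by
    rintro x ⟨z₁, hz₁, z₂, hz₂, rfl⟩
    have e1 : Mq 512 z₁ = 1 - (511/512) * (Real.sqrt z₁ - Real.sqrt ((1 - z₁)/511))^2 := by
      simp only [Mq]; norm_num
    have e2 : Mq 2 z₂ = 1 - (1/2) * (Real.sqrt z₂ - Real.sqrt (1 - z₂))^2 := by
      simp only [Mq]; norm_num
    simp only [e1, e2]
    exact q512q2_pointwise z₁ z₂ hz₁.1 hz₁.2 hz₂.1 hz₂.2
  have hsup : sSup S ≤ 511/1020 := Real.sSup_le key (by norm_num)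
  refine ⟨lt_of_le_of_lt hsup (by norm_num), lt_of_le_of_lt hsup (by norm_num), by norm_num⟩
end

section
/- For d ≥ 2 and any fixed measurement bases, given the probability z_x ∈ [0,1] of the encoded state overlapping with |ψ_{x₁}⟩ and overlap s_x = |⟨ψ_{x₁}|φ_{x₂}⟩|², the maximal achievable value of |⟨φ_{x₂}|x⟩|² over encoded superposition states equals (1 - z_x) + s_x(2z_x - 1) + 2√(s_x(1 - s_x)·z_x·(1 - z_x)). -/
theorem max_overlap_second_basis (s z : ℝ) (hs0 : 0 ≤ s) (hs1 : s ≤ 1)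
    (hz0 : 0 ≤ z) (hz1 : z ≤ 1) :
    IsGreatest
      {t : ℝ | ∃ χ : ℝ × ℝ, χ.1 ^ 2 + χ.2 ^ 2 = 1 ∧ χ.1 ^ 2 = z ∧
        t = (Real.sqrt s * χ.1 + Real.sqrt (1 - s) * χ.2) ^ 2}
      ((1 - z) + s * (2 * z - 1) + 2 * Real.sqrt (s * (1 - s) * z * (1 - z))) := by
  have hs1' : (0:ℝ) ≤ 1 - s := by linarith
  have hz1' : (0:ℝ) ≤ 1 - z := by linarith
  have ha := Real.sq_sqrt hs0
  have hb := Real.sq_sqrt hs1'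
  have hc := Real.sq_sqrt hz0
  have hd := Real.sq_sqrt hz1'
  have hsplit : Real.sqrt (s * (1 - s) * z * (1 - z))
      = Real.sqrt s * Real.sqrt (1 - s) * Real.sqrt z * Real.sqrt (1 - z) := by
    rw [Real.sqrt_mul (by positivity), Real.sqrt_mul (by positivity),
      Real.sqrt_mul hs0]
  constructor
  · refine ⟨(Real.sqrt z, Real.sqrt (1 - z)), by
      simp [Real.sq_sqrt hz0, Real.sq_sqrt hz1'], Real.sq_sqrt hz0, ?_⟩
    rw [hsplit]
    nlinarith [ha, hb, hc, hd]
  · rintro t ⟨⟨x, y⟩, hxy, hx, rfl⟩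
    simp only at hxy hx
    have hy : y ^ 2 = 1 - z := by linarith
    have hxyle : x * y ≤ Real.sqrt z * Real.sqrt (1 - z) := by
      have h1 : x * y ≤ |x * y| := le_abs_self _
      have h2 : |x * y| = Real.sqrt (z * (1 - z)) := by
        rw [← Real.sqrt_sq_eq_abs]
        congr 1
        nlinarith
      rw [h2, Real.sqrt_mul hz0] at h1
      exact h1
    rw [hsplit]
    have hab : 0 ≤ Real.sqrt s * Real.sqrt (1 - s) := by positivity
    nlinarith [mul_le_mul_of_nonneg_left hxyle hab]
end

section
/- The function g(z) = (1/2)(z + M_d^q(z)) with M_d^q(z) = cos²(arccos(1/√d) - arccos(√z)) is concave on [1/d, 1], for each real d ≥ 2. -/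
open Real

theorem asp_concave (d : ℝ) (hd : 2 ≤ d) :
    ConcaveOn ℝ (Set.Icc (1 / d) 1)
      (fun z => (1 / 2) *
        (z + Real.cos (Real.arccos (1 / Real.sqrt d) - Real.arccos (Real.sqrt z)) ^ 2)) := by
  have hd0 : (0 : ℝ) < d := by linarith
  have hdpos : (0 : ℝ) < 1 / d := by positivity
  set c : ℝ := 1 / Real.sqrt d with hc
  set s0 : ℝ := Real.sin (Real.arccos c) with hs0
  have hs0nn : 0 ≤ s0 := by
    rw [hs0, Real.sin_arccos]; positivity
  have hcnn : 0 ≤ c := by rw [hc]; positivity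
  have hS : Convex ℝ (Set.Icc (1 / d) (1 : ℝ)) := convex_Icc _ _
  -- concavity of z ↦ z - z^2 on the interval
  have hq : ConcaveOn ℝ (Set.Icc (1 / d) 1) (fun z : ℝ => z - z ^ 2) := by
    have h1 : ConvexOn ℝ (Set.Icc (1 / d) (1 : ℝ)) (fun z : ℝ => z ^ 2) :=
      (Even.convexOn_pow even_two).subset (Set.subset_univ _) hS
    have h2 : ConcaveOn ℝ (Set.Icc (1 / d) (1 : ℝ)) (fun z : ℝ => z) :=
      ⟨hS, fun x _ y _ a b _ _ hab => by simp [smul_eq_mul]⟩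
    exact h2.sub h1
  -- concavity of z ↦ √(z - z^2)
  have hsq : ConcaveOn ℝ (Set.Icc (1 / d) 1) (fun z : ℝ => Real.sqrt (z - z ^ 2)) := by
    refine ⟨hS, fun x hx y hy a b ha hb hab => ?_⟩
    have hx0 : 0 ≤ x := le_trans hdpos.le hx.1
    have hy0 : 0 ≤ y := le_trans hdpos.le hy.1
    have hqx : (0 : ℝ) ≤ x - x ^ 2 := by nlinarith [hx.2]
    have hqy : (0 : ℝ) ≤ y - y ^ 2 := by nlinarith [hy.2]
    calc a • Real.sqrt (x - x ^ 2) + b • Real.sqrt (y - y ^ 2)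
        ≤ Real.sqrt (a • (x - x ^ 2) + b • (y - y ^ 2)) :=
          Real.strictConcaveOn_sqrt.concaveOn.2 hqx hqy ha hb hab
      _ ≤ Real.sqrt ((a • x + b • y) - (a • x + b • y) ^ 2) :=
          Real.sqrt_le_sqrt (hq.2 hx hy ha hb hab)
  -- concavity of the affine part
  have haff : ConcaveOn ℝ (Set.Icc (1 / d) 1)
      (fun z : ℝ => (1 / 2) * ((1 + c ^ 2 - s0 ^ 2) * z + s0 ^ 2)) := by
    refine ⟨hS, fun x _ y _ a b _ _ hab => ?_⟩
    simp only [smul_eq_mul]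
    nlinarith [hab]
  -- the nice model function
  have hh : ConcaveOn ℝ (Set.Icc (1 / d) 1)
      (fun z : ℝ => (1 / 2) * ((1 + c ^ 2 - s0 ^ 2) * z + s0 ^ 2)
        + (c * s0) * Real.sqrt (z - z ^ 2)) :=
    haff.add (hsq.smul (mul_nonneg hcnn hs0nn))
  refine hh.congr fun z hz => ?_
  have hz0 : 0 ≤ z := le_trans hdpos.le hz.1
  have hz1 : z ≤ 1 := hz.2
  have hsz1 : Real.sqrt z ≤ 1 := by
    rw [show (1 : ℝ) = Real.sqrt 1 by simp]
    exact Real.sqrt_le_sqrt hz1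
  have hd1 : (1 : ℝ) ≤ Real.sqrt d := by
    rw [show (1 : ℝ) = Real.sqrt 1 by simp]
    exact Real.sqrt_le_sqrt (by linarith)
  have hc1 : c ≤ 1 := by
    rw [hc]; exact div_le_one_of_le₀ hd1 (by positivity)
  have hcosb : Real.cos (Real.arccos (Real.sqrt z)) = Real.sqrt z :=
    Real.cos_arccos (le_trans (by norm_num) (Real.sqrt_nonneg z)) hsz1
  have hsinb : Real.sin (Real.arccos (Real.sqrt z)) = Real.sqrt (1 - z) := by
    rw [Real.sin_arccos, Real.sq_sqrt hz0]
  have hcosa : Real.cos (Real.arccos c) = c :=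
    Real.cos_arccos (le_trans (by norm_num) hcnn) hc1
  have hmul : Real.sqrt z * Real.sqrt (1 - z) = Real.sqrt (z - z ^ 2) := by
    rw [← Real.sqrt_mul hz0]
    ring_nf
  have hzsq : Real.sqrt z ^ 2 = z := Real.sq_sqrt hz0
  have h1zsq : Real.sqrt (1 - z) ^ 2 = 1 - z := Real.sq_sqrt (by linarith)
  have hssq : s0 ^ 2 + c ^ 2 = 1 := by
    rw [hs0]; nth_rewrite 2 [← hcosa]; exact Real.sin_sq_add_cos_sq _
  simp only [Real.cos_sub, hcosa, hcosb, hsinb, ← hs0]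
  linear_combination (-(c * s0)) * hmul - (c ^ 2 / 2) * hzsq - (s0 ^ 2 / 2) * h1zsq
end
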